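/- For the general scallop family with entropy S(c) = ((1-nc)²/2) H(p(c)), the derivative satisfies dS/dc = n((n+2)c - 1) ln(1-p) + 2n(1 - (n+1)c) ln(p). If 1/(n+2) < c < 1/(n+1) and 0 < p < 1, then dS/dc < 0. -/

import Mathlib

/-!
Write `q = 1 - n c` and `A = e + n c² - 1 + q²`. Then `p = A / (q²/2)`, so `S` is the entropy
`m · H(a/m)` of the unnormalised two-point weights `a = A` and `m - a`, of total mass `m = q²/2`.
For such weights `d/dc [m · H(a/m)] = -(a' log(a/m) + (m - a)' log(1 - a/m))`: the terms coming
from differentiating `a/m` inside `H` cancel. Here `a' = -2n(1 - (n+1)c)` and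
`(m - a)' = -n((n+2)c - 1)`, and the sign follows since both logarithms are negative.
-/

/-- Binary entropy function. -/
noncomputable def H (u : ℝ) : ℝ := -(u * Real.log u + (1 - u) * Real.log (1 - u))

open Real

theorem H_eq_binEntropy : H = binEntropy := by
  ext u
  simp only [H, binEntropy, log_inv]
  ring

theorem hasDerivAt_mul_binEntropy_div {a m : ℝ → ℝ} {a' m' c : ℝ}
    (ha : HasDerivAt a a' c) (hm : HasDerivAt m m' c) (hu : a c / m c ∈ Set.Ioo 0 1) :
    HasDerivAt (fun x => m x * binEntropy (a x / m x))
      (-(a' * log (a c / m c) + (m' - a') * log (1 - a c / m c))) c := by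
  obtain ⟨hu0, hu1⟩ := hu
  have hmc : m c ≠ 0 := fun h => by simp [h] at hu0
  have hH := (hasDerivAt_binEntropy hu0.ne' hu1.ne).comp c (ha.div hm hmc)
  refine (hm.mul hH).congr_deriv ?_
  simp only [Function.comp_apply, Pi.div_apply, binEntropy, log_inv]
  field_simp
  ring

theorem scallop_coefficients_pos {n c : ℝ} (hn : 0 < n) (h₁ : 1 / (n + 2) < c)
    (h₂ : c < 1 / (n + 1)) :
    0 < n * ((n + 2) * c - 1) ∧ 0 < 2 * n * (1 - (n + 1) * c) := by
  rw [div_lt_iff₀ (by linarith)] at h₁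
  rw [lt_div_iff₀ (by linarith)] at h₂
  constructor <;> nlinarith

theorem general_scallop_entropy_derivative_general
    (n : ℕ) (hn : 1 ≤ n) (e : ℝ) (p S : ℝ → ℝ)
    (hp : p = fun c => (2/(1-(n:ℝ)*c)^2) * (e + (n:ℝ)*c^2 - 1 + (1-(n:ℝ)*c)^2))
    (hS : S = fun c => ((1-(n:ℝ)*c)^2/2) * H (p c))
    (c : ℝ) (hpc : p c ∈ Set.Ioo (0:ℝ) 1) :
    HasDerivAt S ((n:ℝ)*(((n:ℝ)+2)*c - 1) * Real.log (1 - p c)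
        + 2*(n:ℝ)*(1 - ((n:ℝ)+1)*c) * Real.log (p c)) c ∧
    (1/((n:ℝ)+2) < c → c < 1/((n:ℝ)+1) →
      (n:ℝ)*(((n:ℝ)+2)*c - 1) * Real.log (1 - p c)
        + 2*(n:ℝ)*(1 - ((n:ℝ)+1)*c) * Real.log (p c) < 0) := by
  constructor
  · -- both sides vanish where `1 - n x = 0`, so no side condition is needed
    have hp_div : p = fun x => (e + n * x ^ 2 - 1 + (1 - n * x) ^ 2) / ((1 - n * x) ^ 2 / 2) := by
      rw [hp]; ext x; rw [div_div_eq_mul_div]; ring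
    have hq : HasDerivAt (fun x : ℝ => 1 - n * x) (-n) c := by
      simpa using ((hasDerivAt_id' c).const_mul (n : ℝ)).const_sub 1
    have hm : HasDerivAt (fun x : ℝ => (1 - n * x) ^ 2 / 2) (-n * (1 - n * c)) c :=
      ((hq.pow 2).div_const 2).congr_deriv (by push_cast; ring)
    have ha : HasDerivAt (fun x : ℝ => e + n * x ^ 2 - 1 + (1 - n * x) ^ 2)
        (-2 * n * (1 - (n + 1) * c)) c :=
      (((((hasDerivAt_pow 2 c).const_mul (n : ℝ)).const_add e).sub_const 1).add
        (hq.pow 2)).congr_deriv (by push_cast; ring)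
    rw [hS, H_eq_binEntropy]
    rw [hp_div] at hpc ⊢
    exact (hasDerivAt_mul_binEntropy_div ha hm hpc).congr_deriv (by ring)
  · intro h₁ h₂
    obtain ⟨hpos₁, hpos₂⟩ := scallop_coefficients_pos (by exact_mod_cast hn) h₁ h₂
    exact add_neg (mul_neg_of_pos_of_neg hpos₁ (log_neg (sub_pos.2 hpc.2) (sub_lt_self 1 hpc.1)))
      (mul_neg_of_pos_of_neg hpos₂ (log_neg hpc.1 hpc.2))

theorem general_scallop_entropy_derivative
    (n : ℕ) (hn : 1 ≤ n) (e : ℝ) (p S : ℝ → ℝ)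
    (hp : p = fun c => (2/(1-(n:ℝ)*c)^2) * (e + (n:ℝ)*c^2 - 1 + (1-(n:ℝ)*c)^2))
    (hS : S = fun c => ((1-(n:ℝ)*c)^2/2) * H (p c))
    (c : ℝ) (hc : 1 - (n:ℝ)*c ≠ 0) (hpc : p c ∈ Set.Ioo (0:ℝ) 1) :
    HasDerivAt S ((n:ℝ)*(((n:ℝ)+2)*c - 1) * Real.log (1 - p c)
        + 2*(n:ℝ)*(1 - ((n:ℝ)+1)*c) * Real.log (p c)) c ∧
    (1/((n:ℝ)+2) < c → c < 1/((n:ℝ)+1) →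
      (n:ℝ)*(((n:ℝ)+2)*c - 1) * Real.log (1 - p c)
        + 2*(n:ℝ)*(1 - ((n:ℝ)+1)*c) * Real.log (p c) < 0) :=
  general_scallop_entropy_derivative_general n hn e p S hp hS c hpc
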